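/- arXiv:1906.02513 — 12 statements merged into one kernel-verified Lean document; each statement's English description precedes it below -/
import Mathlib

section
/- Let α, β, δ be positive reals satisfying (i) 1 + αδ > δ and (ii) δ(2+αδ) < (1+αδ)²(1+βδ). Let A be the 2×2 real matrix with entries A11 = 1 − 2N* − αδ²/(1+αδ)², A12 = −1/(1+αδ)², A21 = βδ², A22 = −βδ (the Jacobian matrix of the vector field at E*). Then trace(A) < 0 and det(A) = βδN* > 0, and consequently every complex root of the characteristic polynomial λ² − trace(A)·λ + det(A) has negative real part (so E* is linearly stable). -/
lemma root_neg_re (T D : ℝ) (hT : T < 0) (hD : 0 < D) (z : ℂ)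
    (hz : z ^ 2 - (T : ℂ) * z + (D : ℂ) = 0) : z.re < 0 := by
  have hre := congrArg Complex.re hz
  have him := congrArg Complex.im hz
  simp [pow_two, Complex.mul_re, Complex.mul_im] at hre him
  rcases eq_or_ne z.im 0 with hy | hy
  · rw [hy] at hre
    by_contra h
    push_neg at h
    nlinarith [sq_nonneg z.re]
  · have hx : z.re * 2 = T := by
      have : z.im * (z.re * 2 - T) = 0 := by ring_nf; nlinarith [him]
      rcases mul_eq_zero.mp this with h | h
      · exact absurd h hy
      · linarith
    linarith

/-- Under the existence and stability conditions, the Jacobian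
matrix A of the continuous model at the interior equilibrium E* satisfies
trace(A) < 0 and det(A) = βδN* > 0, and hence every complex root of the
characteristic polynomial λ² − trace(A)λ + det(A) has negative real part. -/
theorem stmt_2 (α β δ : ℝ) (hα : 0 < α) (hβ : 0 < β) (hδ : 0 < δ)
    (h1 : 1 + α * δ > δ)
    (h2 : δ * (2 + α * δ) < (1 + α * δ) ^ 2 * (1 + β * δ))
    (Nstar : ℝ) (hN : Nstar = (1 + α * δ - δ) / (1 + α * δ))
    (A : Matrix (Fin 2) (Fin 2) ℝ)
    (hA : A = !![1 - 2 * Nstar - α * δ ^ 2 / (1 + α * δ) ^ 2, -1 / (1 + α * δ) ^ 2;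
                 β * δ ^ 2, -(β * δ)]) :
    Matrix.trace A < 0 ∧ A.det = β * δ * Nstar ∧ 0 < A.det ∧
      ∀ z : ℂ, z ^ 2 - ((Matrix.trace A : ℝ) : ℂ) * z + ((A.det : ℝ) : ℂ) = 0 → z.re < 0 := by
  have hc : (0:ℝ) < 1 + α * δ := by nlinarith
  have hc' : (1 + α * δ) ≠ 0 := ne_of_gt hc
  have hNpos : 0 < Nstar := by
    rw [hN]; exact div_pos (by linarith) hc
  have htr : Matrix.trace A < 0 := by
    subst hA hN
    rw [Matrix.trace_fin_two_of]
    have e : 1 - 2 * ((1 + α * δ - δ) / (1 + α * δ)) - α * δ ^ 2 / (1 + α * δ) ^ 2 + -(β * δ)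
        = (δ * (2 + α * δ) - (1 + α * δ) ^ 2 * (1 + β * δ)) / (1 + α * δ) ^ 2 := by
      field_simp; ring
    rw [e]
    exact div_neg_of_neg_of_pos (by linarith) (by positivity)
  have hdet : A.det = β * δ * Nstar := by
    subst hA hN
    rw [Matrix.det_fin_two_of]
    field_simp
    ring
  refine ⟨htr, hdet, ?_, ?_⟩
  · rw [hdet]; positivity
  · intro z hz
    exact root_neg_re _ _ htr (by rw [hdet]; positivity) z hz
end

section
/- Let α, β, δ, h be positive reals. For any N > 0 and P ≥ 0, both components of Φ(N,P) are well defined and the first component of Φ(N,P) is positive, the second component is nonnegative, and the second component is positive whenever P > 0. In particular the NSFD scheme preserves positivity for every step size h. -/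
/-- The NSFD discretization of the Holling–Tanner model with step size `h`. -/
noncomputable def NSFDmap (α β δ h : ℝ) (p : ℝ × ℝ) : ℝ × ℝ :=
  (p.1 * (1 + h + h * (p.1 + α * p.2)) * (p.1 + α * p.2) /
      ((1 + 2 * h * p.1 + α * h * p.2) * (p.1 + α * p.2) + h * p.2),
   p.2 * p.1 * (1 + β * δ * h) / (p.1 + β * h * p.2))

/-- For positive parameters and step size, and any N > 0, P ≥ 0,
both components of Φ(N,P) are well defined (nonzero denominators), the first
component is positive, the second is nonnegative, and the second component is
positive whenever P > 0: the NSFD scheme preserves positivity for every h. -/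
theorem stmt_3 (α β δ h : ℝ) (hα : 0 < α) (hβ : 0 < β) (hδ : 0 < δ) (hh : 0 < h)
    (N P : ℝ) (hN : 0 < N) (hP : 0 ≤ P) :
    ((1 + 2 * h * N + α * h * P) * (N + α * P) + h * P ≠ 0 ∧ N + β * h * P ≠ 0) ∧
      0 < (NSFDmap α β δ h (N, P)).1 ∧
      0 ≤ (NSFDmap α β δ h (N, P)).2 ∧
      (0 < P → 0 < (NSFDmap α β δ h (N, P)).2) := by
  have hNaP : 0 < N + α * P := by positivity
  have hd1 : 0 < (1 + 2 * h * N + α * h * P) * (N + α * P) + h * P := by positivity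
  have hd2 : 0 < N + β * h * P := by positivity
  refine ⟨⟨ne_of_gt hd1, ne_of_gt hd2⟩, ?_, ?_, ?_⟩
  · simp only [NSFDmap]
    apply div_pos _ hd1
    have : 0 < 1 + h + h * (N + α * P) := by positivity
    positivity
  · simp only [NSFDmap]
    positivity
  · intro hP'
    simp only [NSFDmap]
    positivity
end

section
/- Let α, β, δ, h be positive reals and N₀ > 0, P₀ > 0. Then for every natural number n, the n-th iterate Φⁿ(N₀, P₀) has both components positive; i.e., all solutions of the NSFD discrete system starting from positive initial values remain positive for all time and all step sizes. -/
lemma step_pos (α β δ h : ℝ) (hα : 0 < α) (hβ : 0 < β) (hδ : 0 < δ) (hh : 0 < h)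
    (p : ℝ × ℝ) (h1 : 0 < p.1) (h2 : 0 < p.2) :
    0 < (NSFDmap α β δ h p).1 ∧ 0 < (NSFDmap α β δ h p).2 := by
  unfold NSFDmap
  constructor
  · apply div_pos
    · positivity
    · have : 0 < (1 + 2 * h * p.1 + α * h * p.2) := by positivity
      positivity
  · apply div_pos
    · positivity
    · positivity

/-- For positive parameters, step size and positive initial data,
every iterate of the NSFD map has both components positive: all solutions of
the NSFD discrete system remain positive for all time and all step sizes. -/
theorem stmt_4 (α β δ h : ℝ) (hα : 0 < α) (hβ : 0 < β) (hδ : 0 < δ) (hh : 0 < h)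
    (N₀ P₀ : ℝ) (hN₀ : 0 < N₀) (hP₀ : 0 < P₀) :
    ∀ n : ℕ, 0 < ((NSFDmap α β δ h)^[n] (N₀, P₀)).1 ∧
      0 < ((NSFDmap α β δ h)^[n] (N₀, P₀)).2 := by
  intro n
  induction n with
  | zero => exact ⟨hN₀, hP₀⟩
  | succ k ih =>
    rw [Function.iterate_succ_apply']
    exact step_pos α β δ h hα hβ hδ hh _ ih.1 ih.2
end

section
/- Let α, β, δ, h be positive reals and N > 0, P > 0. Then (N, P) is a fixed point of the NSFD map, i.e. Φ(N, P) = (N, P), if and only if (N, P) satisfies the equilibrium equations of the continuous model: 1 − N − P/(N + αP) = 0 and δ − P/N = 0. In particular the positive fixed points of the NSFD scheme coincide with the positive equilibria of the differential system for every step size. -/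
/-- For positive parameters, step size and positive (N,P), the
point (N,P) is a fixed point of the NSFD map if and only if it satisfies the
equilibrium equations of the continuous model: the positive fixed points of
the NSFD scheme coincide with the positive equilibria of the differential
system for every step size. -/
theorem stmt_7 (α β δ h : ℝ) (hα : 0 < α) (hβ : 0 < β) (hδ : 0 < δ) (hh : 0 < h)
    (N P : ℝ) (hN : 0 < N) (hP : 0 < P) :
    NSFDmap α β δ h (N, P) = (N, P) ↔
      (1 - N - P / (N + α * P) = 0 ∧ δ - P / N = 0) := by
  have hS : 0 < N + α * P := by positivity
  have hd1 : 0 < (1 + 2 * h * N + α * h * P) * (N + α * P) + h * P := by positivity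
  have hd2 : 0 < N + β * h * P := by positivity
  simp only [NSFDmap, Prod.mk.injEq]
  rw [div_eq_iff hd1.ne', div_eq_iff hd2.ne', sub_eq_zero, sub_eq_zero,
    eq_comm (a := (1:ℝ) - N), div_eq_iff hS.ne', eq_comm (a := δ), div_eq_iff hN.ne']
  constructor
  · rintro ⟨h1, h2⟩
    refine ⟨?_, ?_⟩
    · have key : N * h * ((1 - N) * (N + α * P) - P) = 0 := by linear_combination h1
      have hNh : (N * h) ≠ 0 := by positivity
      have := mul_eq_zero.mp key
      rcases this with h' | h'
      · exact absurd h' hNh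
      · linarith
    · have key : P * β * h * (δ * N - P) = 0 := by linear_combination h2
      have hPh : (P * β * h) ≠ 0 := by positivity
      rcases mul_eq_zero.mp key with h' | h'
      · exact absurd h' hPh
      · linarith
  · rintro ⟨h1, h2⟩
    refine ⟨?_, ?_⟩
    · linear_combination (-(N * h)) * h1
    · linear_combination (-(P * β * h)) * h2
end

section
/- Let α, β, δ, h be positive reals satisfying (i) 1 + αδ > δ and (ii) δ(2+αδ) < (1+αδ)²(1+βδ). Then every complex root of the characteristic polynomial λ² − trace(J*)·λ + det(J*) of the NSFD Jacobian matrix J* at E* has modulus strictly less than 1; i.e., the interior fixed point E* of the NSFD discrete system is locally asymptotically stable for every step size h > 0. -/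
/-!
Writing `A = 1 + αδ`, `K = 1 + αδ - δ` (so that `N* = K / A`) and `S = 1 + h + hK`, the
Jacobian simplifies to `!![1 - p c, -p; βδ²h / m, 1 / m]` with `p = h / (A² S)`,
`c = A² - δ(2 + αδ)` and `m = 1 + βδh`. By the Jury test its eigenvalues lie in the open unit
disc as soon as `det (1 - J) > 0`, `det (1 + J) > 0` and `det J < 1`. The first holds because
`c + δ = A K > 0`, the second because `p c < 2`, and the third is exactly where the stability
condition `δ(2 + αδ) < A²(1 + βδ)` of the continuous model enters.
-/

theorem norm_lt_one_of_jury {T D : ℝ} (hA : 0 < 1 - T + D) (hB : 0 < 1 + T + D) (hC : D < 1)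
    {z : ℂ} (hz : z ^ 2 - (T : ℂ) * z + (D : ℂ) = 0) : ‖z‖ < 1 := by
  have hre : z.re ^ 2 - z.im ^ 2 - T * z.re + D = 0 := by
    simpa [pow_two] using congrArg Complex.re hz
  have him : z.im * (2 * z.re - T) = 0 := by
    have := congrArg Complex.im hz
    simp only [pow_two, Complex.sub_im, Complex.add_im, Complex.mul_im, Complex.ofReal_re,
      Complex.ofReal_im, Complex.zero_im] at this
    linarith
  suffices z.re ^ 2 + z.im ^ 2 < 1 by
    rw [← sq_lt_one_iff₀ (norm_nonneg z), Complex.sq_norm, Complex.normSq_apply]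
    linarith
  rcases mul_eq_zero.mp him with hreal | hpair
  · -- a real root is trapped between `-1` and `1`, where the quadratic is positive
    rw [hreal] at hre ⊢
    have hlt : z.re < 1 := by nlinarith
    have hgt : -1 < z.re := by nlinarith
    nlinarith
  · -- a pair of conjugate roots: `‖z‖² = z * conj z = D`
    nlinarith

namespace Matrix

variable {R : Type*} [CommRing R]

theorem det_one_sub_fin_two (J : Matrix (Fin 2) (Fin 2) R) : (1 - J).det = 1 - J.trace + J.det := by
  simp only [det_fin_two, trace_fin_two, sub_apply, one_apply_eq, one_apply_ne zero_ne_one,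
    one_apply_ne one_ne_zero]
  ring

theorem det_one_add_fin_two (J : Matrix (Fin 2) (Fin 2) R) : (1 + J).det = 1 + J.trace + J.det := by
  simp only [det_fin_two, trace_fin_two, add_apply, one_apply_eq, one_apply_ne zero_ne_one,
    one_apply_ne one_ne_zero]
  ring

theorem norm_lt_one_of_charpoly_fin_two {J : Matrix (Fin 2) (Fin 2) ℝ}
    (hA : 0 < (1 - J).det) (hB : 0 < (1 + J).det) (hC : J.det < 1) {z : ℂ}
    (hz : z ^ 2 - (J.trace : ℂ) * z + (J.det : ℂ) = 0) : ‖z‖ < 1 := by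
  rw [det_one_sub_fin_two] at hA
  rw [det_one_add_fin_two] at hB
  exact norm_lt_one_of_jury hA hB hC hz

end Matrix

section NSFDJacobian

noncomputable def nsfdJacobian (p c b δ h : ℝ) : Matrix (Fin 2) (Fin 2) ℝ :=
  !![1 - p * c, -p; b * δ * h / (1 + b * h), 1 / (1 + b * h)]

variable {p c b δ h : ℝ}

theorem det_one_sub_nsfdJacobian (hbh : 1 + b * h ≠ 0) :
    (1 - nsfdJacobian p c b δ h).det = p * b * h * (c + δ) / (1 + b * h) := by
  rw [Matrix.det_one_sub_fin_two, nsfdJacobian, Matrix.trace_fin_two_of,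
    Matrix.det_fin_two_of]
  field_simp
  ring

theorem det_one_add_nsfdJacobian (hbh : 1 + b * h ≠ 0) :
    (1 + nsfdJacobian p c b δ h).det
      = ((2 - p * c) * (2 + b * h) + p * b * δ * h) / (1 + b * h) := by
  rw [Matrix.det_one_add_fin_two, nsfdJacobian, Matrix.trace_fin_two_of,
    Matrix.det_fin_two_of]
  field_simp
  ring

theorem det_nsfdJacobian (hbh : 1 + b * h ≠ 0) :
    (nsfdJacobian p c b δ h).det = (1 - p * c + p * b * δ * h) / (1 + b * h) := by
  rw [nsfdJacobian, Matrix.det_fin_two_of]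
  field_simp
  ring

theorem norm_lt_one_of_nsfdJacobian (hp : 0 < p) (hb : 0 < b) (hδ : 0 < δ) (hh : 0 < h)
    (hcδ : 0 < c + δ) (hpc : p * c < 2) (hdet : p * (b * δ * h - c) < b * h) {z : ℂ}
    (hz : z ^ 2 - ((nsfdJacobian p c b δ h).trace : ℂ) * z
      + ((nsfdJacobian p c b δ h).det : ℂ) = 0) :
    ‖z‖ < 1 := by
  have hm : 0 < 1 + b * h := by positivity
  refine Matrix.norm_lt_one_of_charpoly_fin_two ?_ ?_ ?_ hz
  · rw [det_one_sub_nsfdJacobian hm.ne']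
    positivity
  · rw [det_one_add_nsfdJacobian hm.ne']
    have : 0 < 2 - p * c := by linarith
    positivity
  · rw [det_nsfdJacobian hm.ne', div_lt_one hm]
    linarith

end NSFDJacobian

theorem nsfd_jacobian_eq {α β δ h N P G H : ℝ} (hα : 0 < α) (hβ : 0 < β) (hδ : 0 < δ)
    (hh : 0 < h) (h1 : 1 + α * δ > δ)
    (hN : N = (1 + α * δ - δ) / (1 + α * δ)) (hP : P = δ * N)
    (hG : G = (1 + h + h * (N + α * P)) * (N + α * P)) (hH : H = (1 + β * δ * h) * N) :
    !![1 + N * h * (1 - 2 * N - α * δ * N) / G, N * h * (α - α * N - 1) / G;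
       β * δ ^ 2 * h * N / H, 1 - β * δ * h * N / H]
      = nsfdJacobian (h / ((1 + α * δ) ^ 2 * (1 + h + h * (1 + α * δ - δ))))
          ((1 + α * δ) ^ 2 - δ * (2 + α * δ)) (β * δ) δ h := by
  have hK : 0 < 1 + α * δ - δ := by linarith
  have hNP : N + α * P = 1 + α * δ - δ := by
    rw [hP, hN]
    field_simp
  have hm : 0 < 1 + β * δ * h := by positivity
  have hN0 : N ≠ 0 := by rw [hN]; positivity
  rw [hG, hH, hNP, nsfdJacobian]
  ext i j
  fin_cases i <;> fin_cases j <;>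
    simp only [Fin.zero_eta, Fin.mk_one, Fin.isValue, Matrix.of_apply, Matrix.cons_val',
      Matrix.cons_val_zero, Matrix.cons_val_one, Matrix.cons_val_fin_one]
  · rw [hN]; field_simp; ring
  · rw [hN]; field_simp; ring
  · field_simp
  · field_simp; ring

/-- Under the existence and stability conditions of the
continuous model, every complex root of the characteristic polynomial
λ² − trace(J*)λ + det(J*) of the NSFD Jacobian J* at the interior fixed point
E* has modulus strictly less than 1, for every step size h > 0: E* is locally
asymptotically stable for the NSFD discrete system. -/
theorem stmt_9 (α β δ h : ℝ) (hα : 0 < α) (hβ : 0 < β) (hδ : 0 < δ) (hh : 0 < h)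
    (h1 : 1 + α * δ > δ)
    (h2 : δ * (2 + α * δ) < (1 + α * δ) ^ 2 * (1 + β * δ))
    (Nstar Pstar G H : ℝ)
    (hN : Nstar = (1 + α * δ - δ) / (1 + α * δ))
    (hP : Pstar = δ * Nstar)
    (hG : G = (1 + h + h * (Nstar + α * Pstar)) * (Nstar + α * Pstar))
    (hH : H = (1 + β * δ * h) * Nstar)
    (J : Matrix (Fin 2) (Fin 2) ℝ)
    (hJ : J = !![1 + Nstar * h * (1 - 2 * Nstar - α * δ * Nstar) / G,
                 Nstar * h * (α - α * Nstar - 1) / G;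
                 β * δ ^ 2 * h * Nstar / H,
                 1 - β * δ * h * Nstar / H]) :
    ∀ z : ℂ, z ^ 2 - ((Matrix.trace J : ℝ) : ℂ) * z + ((J.det : ℝ) : ℂ) = 0 →
      ‖z‖ < 1 := by
  intro z hz
  rw [hJ, nsfd_jacobian_eq hα hβ hδ hh h1 hN hP hG hH] at hz
  have hA : 0 < 1 + α * δ := by positivity
  have hK : 0 < 1 + α * δ - δ := by linarith
  have hS : 0 < 1 + h + h * (1 + α * δ - δ) := by positivity
  refine norm_lt_one_of_nsfdJacobian (by positivity) (by positivity) hδ hh ?_ ?_ ?_ hz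
  · -- `c + δ = A K`
    nlinarith
  · rw [div_mul_eq_mul_div, div_lt_iff₀ (by positivity)]
    nlinarith [mul_pos hh (mul_pos hδ (by positivity : 0 < 2 + α * δ)),
      mul_pos (mul_pos (pow_pos hA 2) hh) hK, mul_pos (pow_pos hA 2) hh, pow_pos hA 2]
  · have hδA : δ < (1 + α * δ) ^ 2 * (1 + (1 + α * δ - δ)) := by nlinarith
    rw [div_mul_eq_mul_div, div_lt_iff₀ (by positivity)]
    nlinarith [mul_lt_mul_of_pos_left h2 (mul_pos hβ hδ), mul_pos hh (mul_pos hβ hδ),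
      mul_lt_mul_of_pos_left hδA (mul_pos (mul_pos hh hh) (mul_pos hβ hδ))]
end

section
/- Let α, β, δ, h be positive reals with 1 + αδ > δ. Then the NSFD Jacobian matrix J* at E* satisfies the exact identity 1 − trace(J*) + det(J*) = βδh²(N*)²(1+αδ−δ)/(G·H); in particular 1 − trace(J*) + det(J*) > 0. -/
/-- For positive parameters with 1 + αδ > δ, the NSFD Jacobian
J* at E* satisfies the exact identity
1 − trace(J*) + det(J*) = βδh²(N*)²(1+αδ−δ)/(G·H), which is positive. -/
theorem stmt_10 (α β δ h : ℝ) (hα : 0 < α) (hβ : 0 < β) (hδ : 0 < δ) (hh : 0 < h)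
    (h1 : 1 + α * δ > δ)
    (Nstar Pstar G H : ℝ)
    (hN : Nstar = (1 + α * δ - δ) / (1 + α * δ))
    (hP : Pstar = δ * Nstar)
    (hG : G = (1 + h + h * (Nstar + α * Pstar)) * (Nstar + α * Pstar))
    (hH : H = (1 + β * δ * h) * Nstar)
    (J : Matrix (Fin 2) (Fin 2) ℝ)
    (hJ : J = !![1 + Nstar * h * (1 - 2 * Nstar - α * δ * Nstar) / G,
                 Nstar * h * (α - α * Nstar - 1) / G;
                 β * δ ^ 2 * h * Nstar / H,
                 1 - β * δ * h * Nstar / H]) :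
    1 - Matrix.trace J + J.det =
        β * δ * h ^ 2 * Nstar ^ 2 * (1 + α * δ - δ) / (G * H) ∧
      0 < 1 - Matrix.trace J + J.det := by
  have hden : (0:ℝ) < 1 + α * δ := by nlinarith
  have hNpos : 0 < Nstar := by
    rw [hN]; exact div_pos (by linarith) hden
  have hNe : Nstar * (1 + α * δ) = 1 + α * δ - δ := by
    rw [hN]; field_simp
  have hPpos : 0 < Pstar := by rw [hP]; positivity
  have hGpos : 0 < G := by rw [hG]; positivity
  have hHpos : 0 < H := by rw [hH]; positivity
  have key : 1 - Matrix.trace J + J.det =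
      β * δ * h ^ 2 * Nstar ^ 2 * (1 + α * δ - δ) / (G * H) := by
    subst hJ
    simp [Matrix.trace_fin_two, Matrix.det_fin_two]
    field_simp
    linear_combination (2 * Nstar ^ 2 * h ^ 2 * δ * β) * hNe
  refine ⟨key, ?_⟩
  rw [key]
  have : 0 < 1 + α * δ - δ := by linarith
  positivity
end

section
/- Let α, β, δ, h be positive reals satisfying (i) 1 + αδ > δ and (ii) δ(2+αδ) < (1+αδ)²(1+βδ). Then the NSFD Jacobian matrix J* at E* satisfies trace(J*) > 0 and 1 − det(J*) > 0, for every step size h > 0. -/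
set_option maxHeartbeats 1000000


/-- Under the existence and stability conditions of the
continuous model, the NSFD Jacobian J* at E* satisfies trace(J*) > 0 and
1 − det(J*) > 0, for every step size h > 0. -/
theorem stmt_11 (α β δ h : ℝ) (hα : 0 < α) (hβ : 0 < β) (hδ : 0 < δ) (hh : 0 < h)
    (h1 : 1 + α * δ > δ)
    (h2 : δ * (2 + α * δ) < (1 + α * δ) ^ 2 * (1 + β * δ))
    (Nstar Pstar G H : ℝ)
    (hN : Nstar = (1 + α * δ - δ) / (1 + α * δ))
    (hP : Pstar = δ * Nstar)
    (hG : G = (1 + h + h * (Nstar + α * Pstar)) * (Nstar + α * Pstar))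
    (hH : H = (1 + β * δ * h) * Nstar)
    (J : Matrix (Fin 2) (Fin 2) ℝ)
    (hJ : J = !![1 + Nstar * h * (1 - 2 * Nstar - α * δ * Nstar) / G,
                 Nstar * h * (α - α * Nstar - 1) / G;
                 β * δ ^ 2 * h * Nstar / H,
                 1 - β * δ * h * Nstar / H]) :
    0 < Matrix.trace J ∧ 0 < 1 - J.det := by
  set s : ℝ := 1 + α * δ with hsdef
  have hs1 : (1:ℝ) < s := by nlinarith
  have hs0 : (0:ℝ) < s := by linarith
  have hM : (0:ℝ) < s - δ := by linarith [h1]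
  have hbd : (0:ℝ) < β * δ * h := by positivity
  have hden : (0:ℝ) < 1 + h + h * (s - δ) := by nlinarith
  have hNpos : 0 < Nstar := by
    rw [hN]; exact div_pos (by linarith) hs0
  have hGval : G = (1 + h + h * (s - δ)) * (s - δ) := by
    have e : Nstar + α * Pstar = s - δ := by
      rw [hP, hN]; field_simp; ring
    rw [hG, e]
  have hGpos : 0 < G := by
    rw [hGval]; positivity
  have hHpos : 0 < H := by
    rw [hH]; positivity
  have hbd1 : (0:ℝ) < 1 + β * δ * h := by linarith
  -- entry simplifications
  have t2 : 1 - β * δ * h * Nstar / H = 1 / (1 + β * δ * h) := by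
    rw [hH]
    field_simp
    ring
  have t1 : 1 + Nstar * h * (1 - 2 * Nstar - α * δ * Nstar) / G
      = (s ^ 2 + h * ((s - δ) * s ^ 2 + δ + δ * s)) / ((1 + h + h * (s - δ)) * s ^ 2) := by
    rw [hGval, hN]
    have hd1 : (1 + h + h * (s - δ)) ≠ 0 := ne_of_gt hden
    have hd2 : s - δ ≠ 0 := ne_of_gt hM
    field_simp
    ring
  have hnum1 : 0 < s ^ 2 + h * ((s - δ) * s ^ 2 + δ + δ * s) := by
    have : 0 < (s - δ) * s ^ 2 + δ + δ * s := by positivity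
    positivity
  have htr : 0 < Matrix.trace J := by
    rw [hJ, Matrix.trace_fin_two_of, t1, t2]
    have h1' : 0 < (s ^ 2 + h * ((s - δ) * s ^ 2 + δ + δ * s)) / ((1 + h + h * (s - δ)) * s ^ 2) :=
      div_pos hnum1 (by positivity)
    have h2' : 0 < 1 / (1 + β * δ * h) := by positivity
    linarith
  refine ⟨htr, ?_⟩
  -- determinant
  have hW0 : 0 < β * δ * s ^ 2 + s ^ 2 - δ * (1 + s) := by nlinarith [h2]
  have hW1 : 0 < s ^ 2 * (s - δ) + (s ^ 2 - δ) := by nlinarith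
  have hW : 0 < (β * δ * s ^ 2 + s ^ 2 - δ * (1 + s))
      + h * (β * δ) * (s ^ 2 * (s - δ) + (s ^ 2 - δ)) := by
    have : 0 < h * (β * δ) * (s ^ 2 * (s - δ) + (s ^ 2 - δ)) := by positivity
    linarith
  have edet : 1 - J.det = h * ((β * δ * s ^ 2 + s ^ 2 - δ * (1 + s))
      + h * (β * δ) * (s ^ 2 * (s - δ) + (s ^ 2 - δ)))
      / (s ^ 2 * (1 + h + h * (s - δ)) * (1 + β * δ * h)) := by
    rw [hJ, Matrix.det_fin_two_of]
    rw [hGval, hH, hN]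
    field_simp
    ring
  rw [edet]
  positivity
end

section
/- Let α, β, δ, h be positive reals satisfying (i) 1 + αδ > δ and (ii) δ(2+αδ) < (1+αδ)²(1+βδ), and suppose h < min( G_E/H_E , 2(1+αδ)²/G_E ). Then every complex root of the characteristic polynomial λ² − trace(J_E)·λ + det(J_E) of the Euler Jacobian matrix J_E at E* has modulus strictly less than 1; i.e., the interior fixed point E* of the Euler discrete system is locally asymptotically stable. -/
/-!
At `E*` the Euler Jacobian has trace `2 - hG/s²` and determinant `1 - hG/s² + h²H/s²`, where
`s = 1 + αδ`. By the Schur–Cohn (Jury) test a real monic quadratic `λ² - Tλ + D` has both roots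
in the open unit disc as soon as `1 - T + D > 0`, `1 + T + D > 0` and `D < 1`; here these read
`h²H > 0`, `hG < 2s²` and `hH < G`, which is exactly the step-size restriction.
-/

theorem Complex.norm_lt_one_of_quadratic_root {T D : ℝ} (hm : 0 < 1 - T + D)
    (hp : 0 < 1 + T + D) (hD : D < 1) {z : ℂ}
    (hz : z ^ 2 - (T : ℂ) * z + (D : ℂ) = 0) : ‖z‖ < 1 := by
  obtain ⟨hre, him⟩ := Complex.ext_iff.1 hz
  simp only [pow_two, Complex.sub_re, Complex.add_re, Complex.mul_re, Complex.ofReal_re,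
    Complex.ofReal_im, Complex.zero_re, Complex.sub_im, Complex.add_im, Complex.mul_im,
    Complex.zero_im] at hre him
  suffices hsq : z.re ^ 2 + z.im ^ 2 < 1 by
    have hnorm : ‖z‖ ^ 2 = z.re ^ 2 + z.im ^ 2 := by
      rw [Complex.sq_norm, Complex.normSq_apply]; ring
    nlinarith [norm_nonneg z]
  rcases eq_or_ne z.im 0 with hreal | hnonreal
  · -- a real root `x ≥ 1` would force `x + 1 < T` and then `D = x (T - x) > 1`;
    -- symmetrically for `x ≤ -1`
    rw [hreal] at hre ⊢
    have hx_lt : z.re < 1 := by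
      by_contra! hx
      nlinarith
    have hx_gt : -1 < z.re := by
      by_contra! hx
      nlinarith
    nlinarith
  · -- a non-real root comes with its conjugate, so `|z|² = D`
    have hT : T = 2 * z.re := by
      have : z.im * (2 * z.re - T) = 0 := by linarith
      linarith [(mul_eq_zero.1 this).resolve_left hnonreal]
    subst hT
    nlinarith

theorem trace_det_eulerJacobian {α β δ h N P : ℝ} (hs : 1 + α * δ ≠ 0)
    (hsd : 1 + α * δ - δ ≠ 0) (hN : N = (1 + α * δ - δ) / (1 + α * δ)) (hP : P = δ * N) :
    Matrix.trace !![1 - h * N * (1 - P / (N + α * P) ^ 2), -(h * (N / (N + α * P)) ^ 2);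
        h * β * (P / N) ^ 2, 1 - h * β * P / N] =
      2 - h * ((1 + α * δ) ^ 2 * (1 + β * δ) - δ * (2 + α * δ)) / (1 + α * δ) ^ 2 ∧
    Matrix.det !![1 - h * N * (1 - P / (N + α * P) ^ 2), -(h * (N / (N + α * P)) ^ 2);
        h * β * (P / N) ^ 2, 1 - h * β * P / N] =
      1 - h * ((1 + α * δ) ^ 2 * (1 + β * δ) - δ * (2 + α * δ)) / (1 + α * δ) ^ 2
        + h ^ 2 * (β * δ * (1 + α * δ - δ) * (1 + α * δ)) / (1 + α * δ) ^ 2 := by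
  have hsum : N + α * P = 1 + α * δ - δ := by
    rw [hP, hN]; field_simp
  rw [Matrix.trace_fin_two_of, Matrix.det_fin_two_of, hsum, hP, hN]
  constructor <;> (field_simp; ring)

theorem norm_lt_one_of_root_of_step {s G H h : ℝ} (hs : 0 < s) (hh : 0 < h) (hH : 0 < H)
    (hHG : h * H < G) (hGs : h * G < 2 * s) {z : ℂ}
    (hz : z ^ 2 - ((2 - h * G / s : ℝ) : ℂ) * z
      + ((1 - h * G / s + h ^ 2 * H / s : ℝ) : ℂ) = 0) :
    ‖z‖ < 1 := by
  have hA : h * G / s < 2 := by rw [div_lt_iff₀ hs]; linarith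
  have hB : h ^ 2 * H / s < h * G / s := by
    have : h ^ 2 * H < h * G := by rw [pow_two, mul_assoc]; exact mul_lt_mul_of_pos_left hHG hh
    gcongr
  have hB_pos : 0 < h ^ 2 * H / s := by positivity
  exact Complex.norm_lt_one_of_quadratic_root (by linarith) (by linarith) (by linarith) hz

theorem stmt_13_general (α β δ h : ℝ) (hβ : 0 < β) (hδ : 0 < δ) (hh : 0 < h)
    (h1 : 1 + α * δ > δ)
    (h2 : δ * (2 + α * δ) < (1 + α * δ) ^ 2 * (1 + β * δ))
    (Nstar Pstar GE HE : ℝ)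
    (hN : Nstar = (1 + α * δ - δ) / (1 + α * δ))
    (hP : Pstar = δ * Nstar)
    (hGE : GE = (1 + α * δ) ^ 2 * (1 + β * δ) - δ * (2 + α * δ))
    (hHE : HE = β * δ * (1 + α * δ - δ) * (1 + α * δ))
    (hstep : h < min (GE / HE) (2 * (1 + α * δ) ^ 2 / GE))
    (J : Matrix (Fin 2) (Fin 2) ℝ)
    (hJ : J = !![1 - h * Nstar * (1 - Pstar / (Nstar + α * Pstar) ^ 2),
                 -(h * (Nstar / (Nstar + α * Pstar)) ^ 2);
                 h * β * (Pstar / Nstar) ^ 2,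
                 1 - h * β * Pstar / Nstar]) :
    ∀ z : ℂ, z ^ 2 - ((Matrix.trace J : ℝ) : ℂ) * z + ((J.det : ℝ) : ℂ) = 0 →
      ‖z‖ < 1 := by
  intro z hz
  have hs : 0 < 1 + α * δ := by linarith
  have hsd : 0 < 1 + α * δ - δ := by linarith
  have hG : 0 < GE := by rw [hGE]; linarith
  have hH : 0 < HE := by rw [hHE]; positivity
  obtain ⟨hT, hD⟩ := trace_det_eulerJacobian (β := β) (h := h) hs.ne' hsd.ne' hN hP
  rw [hJ, hT, hD, ← hGE, ← hHE] at hz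
  have hstepH : h * HE < GE := (lt_div_iff₀ hH).1 (lt_of_lt_of_le hstep (min_le_left _ _))
  have hstepG : h * GE < 2 * (1 + α * δ) ^ 2 :=
    (lt_div_iff₀ hG).1 (lt_of_lt_of_le hstep (min_le_right _ _))
  exact norm_lt_one_of_root_of_step (by positivity) hh hH hstepH hstepG hz

/-- Under the existence and stability conditions of the
continuous model and the step-size restriction h < min(G_E/H_E, 2(1+αδ)²/G_E),
every complex root of the characteristic polynomial λ² − trace(J_E)λ + det(J_E)
of the Euler Jacobian J_E at E* has modulus strictly less than 1: the interior
fixed point E* of the Euler discrete system is locally asymptotically stable. -/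
theorem stmt_13 (α β δ h : ℝ) (hα : 0 < α) (hβ : 0 < β) (hδ : 0 < δ) (hh : 0 < h)
    (h1 : 1 + α * δ > δ)
    (h2 : δ * (2 + α * δ) < (1 + α * δ) ^ 2 * (1 + β * δ))
    (Nstar Pstar GE HE : ℝ)
    (hN : Nstar = (1 + α * δ - δ) / (1 + α * δ))
    (hP : Pstar = δ * Nstar)
    (hGE : GE = (1 + α * δ) ^ 2 * (1 + β * δ) - δ * (2 + α * δ))
    (hHE : HE = β * δ * (1 + α * δ - δ) * (1 + α * δ))
    (hstep : h < min (GE / HE) (2 * (1 + α * δ) ^ 2 / GE))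
    (J : Matrix (Fin 2) (Fin 2) ℝ)
    (hJ : J = !![1 - h * Nstar * (1 - Pstar / (Nstar + α * Pstar) ^ 2),
                 -(h * (Nstar / (Nstar + α * Pstar)) ^ 2);
                 h * β * (Pstar / Nstar) ^ 2,
                 1 - h * β * Pstar / Nstar]) :
    ∀ z : ℂ, z ^ 2 - ((Matrix.trace J : ℝ) : ℂ) * z + ((J.det : ℝ) : ℂ) = 0 →
      ‖z‖ < 1 :=
  stmt_13_general α β δ h hβ hδ hh h1 h2 Nstar Pstar GE HE hN hP hGE hHE hstep J hJ
end

section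
/- Let α, β, δ, h be positive reals with 1 + αδ > δ. Then the Euler Jacobian matrix J_E at E* satisfies the exact identity 1 − trace(J_E) + det(J_E) = h²βP* = h²βδN*; in particular 1 − trace(J_E) + det(J_E) > 0 for every step size h > 0. -/
theorem Matrix.one_sub_trace_add_det_fin_two {R : Type*} [CommRing R]
    (A : Matrix (Fin 2) (Fin 2) R) :
    1 - A.trace + A.det = (1 - A 0 0) * (1 - A 1 1) - A 0 1 * A 1 0 := by
  rw [Matrix.trace_fin_two, Matrix.det_fin_two]
  ring

/-- The terms `± h²βP²/(N + αP)²` from the two products cancel, leaving `h²βP`. -/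
theorem eulerJacobian_one_sub_trace_add_det {α β h N P : ℝ} (hN : N ≠ 0) :
    1 - Matrix.trace !![1 - h * N * (1 - P / (N + α * P) ^ 2), -(h * (N / (N + α * P)) ^ 2);
                        h * β * (P / N) ^ 2, 1 - h * β * P / N]
      + Matrix.det !![1 - h * N * (1 - P / (N + α * P) ^ 2), -(h * (N / (N + α * P)) ^ 2);
                        h * β * (P / N) ^ 2, 1 - h * β * P / N]
      = h ^ 2 * β * P := by
  rw [Matrix.one_sub_trace_add_det_fin_two]
  simp only [Matrix.of_apply, Matrix.cons_val', Matrix.cons_val_zero, Matrix.cons_val_one,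
    Matrix.empty_val', Matrix.cons_val_fin_one]
  field_simp
  ring

theorem interiorEquilibrium_pos {α δ : ℝ} (hδ : 0 < δ) (h1 : 1 + α * δ > δ) :
    0 < (1 + α * δ - δ) / (1 + α * δ) :=
  div_pos (by linarith) (by linarith)

theorem stmt_14_general (α β δ h : ℝ) (hβ : 0 < β) (hδ : 0 < δ) (hh : 0 < h)
    (h1 : 1 + α * δ > δ)
    (Nstar Pstar : ℝ)
    (hN : Nstar = (1 + α * δ - δ) / (1 + α * δ))
    (hP : Pstar = δ * Nstar)
    (J : Matrix (Fin 2) (Fin 2) ℝ)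
    (hJ : J = !![1 - h * Nstar * (1 - Pstar / (Nstar + α * Pstar) ^ 2),
                 -(h * (Nstar / (Nstar + α * Pstar)) ^ 2);
                 h * β * (Pstar / Nstar) ^ 2,
                 1 - h * β * Pstar / Nstar]) :
    1 - Matrix.trace J + J.det = h ^ 2 * β * Pstar ∧
      1 - Matrix.trace J + J.det = h ^ 2 * β * δ * Nstar ∧
      0 < 1 - Matrix.trace J + J.det := by
  have hNpos : 0 < Nstar := hN ▸ interiorEquilibrium_pos hδ h1
  have key : 1 - Matrix.trace J + J.det = h ^ 2 * β * Pstar :=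
    hJ ▸ eulerJacobian_one_sub_trace_add_det hNpos.ne'
  refine ⟨key, by rw [key, hP]; ring, ?_⟩
  rw [key, hP]
  positivity

/-- For positive parameters with 1 + αδ > δ, the Euler Jacobian
J_E at E* satisfies the exact identity
1 − trace(J_E) + det(J_E) = h²βP* = h²βδN*, which is positive for every h > 0. -/
theorem stmt_14 (α β δ h : ℝ) (hα : 0 < α) (hβ : 0 < β) (hδ : 0 < δ) (hh : 0 < h)
    (h1 : 1 + α * δ > δ)
    (Nstar Pstar : ℝ)
    (hN : Nstar = (1 + α * δ - δ) / (1 + α * δ))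
    (hP : Pstar = δ * Nstar)
    (J : Matrix (Fin 2) (Fin 2) ℝ)
    (hJ : J = !![1 - h * Nstar * (1 - Pstar / (Nstar + α * Pstar) ^ 2),
                 -(h * (Nstar / (Nstar + α * Pstar)) ^ 2);
                 h * β * (Pstar / Nstar) ^ 2,
                 1 - h * β * Pstar / Nstar]) :
    1 - Matrix.trace J + J.det = h ^ 2 * β * Pstar ∧
      1 - Matrix.trace J + J.det = h ^ 2 * β * δ * Nstar ∧
      0 < 1 - Matrix.trace J + J.det :=
  stmt_14_general α β δ h hβ hδ hh h1 Nstar Pstar hN hP J hJ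
end

section
/- Let α, β, δ, h be positive reals with 1 + αδ > δ. Then the Euler Jacobian matrix J_E at E* satisfies the exact identity 1 − det(J_E) = h(G_E − hH_E)/(1+αδ)². Consequently, since H_E > 0, one has 1 − det(J_E) > 0 if and only if h < G_E/H_E. -/
/-- For positive parameters with 1 + αδ > δ, the Euler Jacobian
J_E at E* satisfies the exact identity 1 − det(J_E) = h(G_E − hH_E)/(1+αδ)²;
consequently, since H_E > 0, 1 − det(J_E) > 0 if and only if h < G_E/H_E. -/
theorem stmt_15 (α β δ h : ℝ) (hα : 0 < α) (hβ : 0 < β) (hδ : 0 < δ) (hh : 0 < h)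
    (h1 : 1 + α * δ > δ)
    (Nstar Pstar GE HE : ℝ)
    (hN : Nstar = (1 + α * δ - δ) / (1 + α * δ))
    (hP : Pstar = δ * Nstar)
    (hGE : GE = (1 + α * δ) ^ 2 * (1 + β * δ) - δ * (2 + α * δ))
    (hHE : HE = β * δ * (1 + α * δ - δ) * (1 + α * δ))
    (J : Matrix (Fin 2) (Fin 2) ℝ)
    (hJ : J = !![1 - h * Nstar * (1 - Pstar / (Nstar + α * Pstar) ^ 2),
                 -(h * (Nstar / (Nstar + α * Pstar)) ^ 2);
                 h * β * (Pstar / Nstar) ^ 2,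
                 1 - h * β * Pstar / Nstar]) :
    1 - J.det = h * (GE - h * HE) / (1 + α * δ) ^ 2 ∧
      0 < HE ∧ (0 < 1 - J.det ↔ h < GE / HE) := by
  have hA : (0:ℝ) < 1 + α * δ := by nlinarith
  have hNd : (0:ℝ) < 1 + α * δ - δ := by linarith
  have hNpos : 0 < Nstar := by rw [hN]; positivity
  have hPpos : 0 < Pstar := by rw [hP]; positivity
  have hdenom : Nstar + α * Pstar = (1 + α * δ) * Nstar := by
    rw [hP]; ring
  have hdpos : (0:ℝ) < Nstar + α * Pstar := by rw [hdenom]; positivity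
  have hdet : J.det = (1 - h * Nstar * (1 - Pstar / (Nstar + α * Pstar) ^ 2)) *
      (1 - h * β * Pstar / Nstar) -
      (-(h * (Nstar / (Nstar + α * Pstar)) ^ 2)) * (h * β * (Pstar / Nstar) ^ 2) := by
    rw [hJ]; simp [Matrix.det_fin_two]
  have key : 1 - J.det = h * (GE - h * HE) / (1 + α * δ) ^ 2 := by
    rw [hdet, hdenom, hP, hN, hGE, hHE]
    have hNe : (1 + α * δ - δ) / (1 + α * δ) ≠ 0 := by positivity
    field_simp
    ring
  have hHEpos : 0 < HE := by rw [hHE]; positivity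
  refine ⟨key, hHEpos, ?_⟩
  rw [key]
  rw [lt_div_iff₀ hHEpos]
  constructor
  · intro hpos
    have h2 : 0 < GE - h * HE := by
      by_contra hc
      push_neg at hc
      have : h * (GE - h * HE) / (1 + α * δ) ^ 2 ≤ 0 := by
        apply div_nonpos_of_nonpos_of_nonneg
        · nlinarith
        · positivity
      linarith
    nlinarith
  · intro hlt
    have : 0 < GE - h * HE := by nlinarith
    positivity
end

section
/- Let α, β, δ, h be positive reals satisfying (i) 1 + αδ > δ and (ii) δ(2+αδ) < (1+αδ)²(1+βδ). If 0 < h < 2(1+αδ)²/G_E, then the Euler Jacobian matrix J_E at E* satisfies 1 + trace(J_E) + det(J_E) > 0. -/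
set_option maxHeartbeats 1000000 in
/-- Under the existence and stability conditions of the
continuous model, if 0 < h < 2(1+αδ)²/G_E then the Euler Jacobian J_E at E*
satisfies 1 + trace(J_E) + det(J_E) > 0. -/
theorem stmt_16 (α β δ h : ℝ) (hα : 0 < α) (hβ : 0 < β) (hδ : 0 < δ) (hh : 0 < h)
    (h1 : 1 + α * δ > δ)
    (h2 : δ * (2 + α * δ) < (1 + α * δ) ^ 2 * (1 + β * δ))
    (Nstar Pstar GE : ℝ)
    (hN : Nstar = (1 + α * δ - δ) / (1 + α * δ))
    (hP : Pstar = δ * Nstar)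
    (hGE : GE = (1 + α * δ) ^ 2 * (1 + β * δ) - δ * (2 + α * δ))
    (hstep : h < 2 * (1 + α * δ) ^ 2 / GE)
    (J : Matrix (Fin 2) (Fin 2) ℝ)
    (hJ : J = !![1 - h * Nstar * (1 - Pstar / (Nstar + α * Pstar) ^ 2),
                 -(h * (Nstar / (Nstar + α * Pstar)) ^ 2);
                 h * β * (Pstar / Nstar) ^ 2,
                 1 - h * β * Pstar / Nstar]) :
    0 < 1 + Matrix.trace J + J.det := by
  have hA : (0:ℝ) < 1 + α * δ := by positivity
  have hAd : (0:ℝ) < 1 + α * δ - δ := by linarith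
  have hGpos : 0 < GE := by rw [hGE]; linarith
  have hstep' : h * GE < 2 * (1 + α * δ) ^ 2 := (lt_div_iff₀ hGpos).mp hstep
  rw [hGE] at hstep'
  have hAne : (1 + α * δ) ≠ 0 := ne_of_gt hA
  have hAdne : (1 + α * δ - δ) ≠ 0 := ne_of_gt hAd
  subst hJ hP hN
  rw [Matrix.trace_fin_two_of, Matrix.det_fin_two_of]
  have hnum : 0 < 4 * (1 + α * δ) ^ 2
      - 2 * h * ((1 + α * δ) ^ 2 * (1 + β * δ) - δ * (2 + α * δ))
      + h ^ 2 * (β * δ * (1 + α * δ - δ) * (1 + α * δ)) := by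
    have hH : 0 ≤ h ^ 2 * (β * δ * (1 + α * δ - δ) * (1 + α * δ)) := by positivity
    linarith
  have hid : 1 + ((1 - h * ((1 + α * δ - δ) / (1 + α * δ)) *
        (1 - δ * ((1 + α * δ - δ) / (1 + α * δ)) /
          ((1 + α * δ - δ) / (1 + α * δ) + α * (δ * ((1 + α * δ - δ) / (1 + α * δ)))) ^ 2)) +
      (1 - h * β * (δ * ((1 + α * δ - δ) / (1 + α * δ))) / ((1 + α * δ - δ) / (1 + α * δ)))) +
      ((1 - h * ((1 + α * δ - δ) / (1 + α * δ)) *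
        (1 - δ * ((1 + α * δ - δ) / (1 + α * δ)) /
          ((1 + α * δ - δ) / (1 + α * δ) + α * (δ * ((1 + α * δ - δ) / (1 + α * δ)))) ^ 2)) *
      (1 - h * β * (δ * ((1 + α * δ - δ) / (1 + α * δ))) / ((1 + α * δ - δ) / (1 + α * δ))) -
      -(h * (((1 + α * δ - δ) / (1 + α * δ)) /
          ((1 + α * δ - δ) / (1 + α * δ) + α * (δ * ((1 + α * δ - δ) / (1 + α * δ))))) ^ 2) *
      (h * β * (δ * ((1 + α * δ - δ) / (1 + α * δ)) / ((1 + α * δ - δ) / (1 + α * δ))) ^ 2)) =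
      (4 * (1 + α * δ) ^ 2
      - 2 * h * ((1 + α * δ) ^ 2 * (1 + β * δ) - δ * (2 + α * δ))
      + h ^ 2 * (β * δ * (1 + α * δ - δ) * (1 + α * δ))) / (1 + α * δ) ^ 2 := by
    field_simp
    ring
  rw [hid]
  positivity
end

section
/- Let α, β, δ, h be positive reals satisfying (i) 1 + αδ > δ and (ii) δ(2+αδ) < (1+αδ)²(1+βδ). If h > G_E/H_E, then det(J_E) > 1, and consequently at least one complex root of λ² − trace(J_E)·λ + det(J_E) has modulus strictly greater than 1; i.e., the interior fixed point E* of the Euler discrete system is unstable when the step-size restriction is violated. -/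
/-!
At the interior equilibrium the ratios simplify to `N*/(N*+αP*) = 1/(1+αδ)` and `P*/N* = δ`,
and a direct computation gives `det J_E = 1 + h (h H_E - G_E) / (1+αδ)²`, so `det J_E > 1` exactly
when `h > G_E/H_E`. The two roots of the characteristic polynomial multiply to `det J_E`, hence
one of them lies outside the closed unit disc.
-/

theorem one_lt_norm_or_one_lt_norm_of_one_lt_norm_mul {R : Type*} [SeminormedRing R] {a b : R}
    (hab : 1 < ‖a * b‖) : 1 < ‖a‖ ∨ 1 < ‖b‖ := by
  by_contra! h
  exact hab.not_ge ((norm_mul_le a b).trans (mul_le_one₀ h.1 (norm_nonneg b) h.2))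

theorem Complex.exists_quadratic_root_one_lt_norm (T D : ℂ) (hD : 1 < ‖D‖) :
    ∃ z : ℂ, z ^ 2 - T * z + D = 0 ∧ 1 < ‖z‖ := by
  obtain ⟨w, hw⟩ := IsAlgClosed.exists_pow_nat_eq (T ^ 2 - 4 * D) (n := 2) two_pos
  have hroot₁ : ((T + w) / 2) ^ 2 - T * ((T + w) / 2) + D = 0 := by
    linear_combination (1 / 4 : ℂ) * hw
  have hroot₂ : ((T - w) / 2) ^ 2 - T * ((T - w) / 2) + D = 0 := by
    linear_combination (1 / 4 : ℂ) * hw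
  have hvieta : (T + w) / 2 * ((T - w) / 2) = D := by
    linear_combination (-1 / 4 : ℂ) * hw
  rcases one_lt_norm_or_one_lt_norm_of_one_lt_norm_mul (hvieta ▸ hD) with h | h
  · exact ⟨_, hroot₁, h⟩
  · exact ⟨_, hroot₂, h⟩

noncomputable def eulerJacobian (α β h N P : ℝ) : Matrix (Fin 2) (Fin 2) ℝ :=
  !![1 - h * N * (1 - P / (N + α * P) ^ 2), -(h * (N / (N + α * P)) ^ 2);
     h * β * (P / N) ^ 2, 1 - h * β * P / N]

theorem det_eulerJacobian_interior (α β δ h : ℝ) (hs : 1 + α * δ ≠ 0)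
    (hsd : 1 + α * δ - δ ≠ 0) :
    (eulerJacobian α β h ((1 + α * δ - δ) / (1 + α * δ))
        (δ * ((1 + α * δ - δ) / (1 + α * δ)))).det =
      1 + h * (h * (β * δ * (1 + α * δ - δ) * (1 + α * δ)) -
        ((1 + α * δ) ^ 2 * (1 + β * δ) - δ * (2 + α * δ))) / (1 + α * δ) ^ 2 := by
  rw [eulerJacobian, Matrix.det_fin_two_of]
  field_simp
  ring

theorem stmt_17_general (α β δ h : ℝ) (hβ : 0 < β) (hδ : 0 < δ) (hh : 0 < h)
    (h1 : 1 + α * δ > δ)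
    (Nstar Pstar GE HE : ℝ)
    (hN : Nstar = (1 + α * δ - δ) / (1 + α * δ))
    (hP : Pstar = δ * Nstar)
    (hGE : GE = (1 + α * δ) ^ 2 * (1 + β * δ) - δ * (2 + α * δ))
    (hHE : HE = β * δ * (1 + α * δ - δ) * (1 + α * δ))
    (hstep : h > GE / HE)
    (J : Matrix (Fin 2) (Fin 2) ℝ)
    (hJ : J = !![1 - h * Nstar * (1 - Pstar / (Nstar + α * Pstar) ^ 2),
                 -(h * (Nstar / (Nstar + α * Pstar)) ^ 2);
                 h * β * (Pstar / Nstar) ^ 2,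
                 1 - h * β * Pstar / Nstar]) :
    J.det > 1 ∧
      ∃ z : ℂ, z ^ 2 - ((Matrix.trace J : ℝ) : ℂ) * z + ((J.det : ℝ) : ℂ) = 0 ∧
        ‖z‖ > 1 := by
  have hsd : 0 < 1 + α * δ - δ := by linarith
  have hs : 0 < 1 + α * δ := by linarith
  have hHE_pos : 0 < HE := by rw [hHE]; positivity
  have hgap : 0 < h * HE - GE := by linarith [(div_lt_iff₀ hHE_pos).mp hstep]
  have hdet : J.det = 1 + h * (h * HE - GE) / (1 + α * δ) ^ 2 := by
    change J = eulerJacobian α β h Nstar Pstar at hJ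
    rw [hJ, hP, hN, hGE, hHE, det_eulerJacobian_interior α β δ h hs.ne' hsd.ne']
  have hdet_gt : J.det > 1 := by
    rw [hdet]
    have : 0 < h * (h * HE - GE) / (1 + α * δ) ^ 2 := by positivity
    linarith
  refine ⟨hdet_gt, Complex.exists_quadratic_root_one_lt_norm _ _ ?_⟩
  rwa [Complex.norm_real, Real.norm_of_nonneg (by linarith)]

/-- Under the existence and stability conditions of the
continuous model, if h > G_E/H_E then det(J_E) > 1, and consequently at least
one complex root of λ² − trace(J_E)λ + det(J_E) has modulus strictly greater
than 1: the interior fixed point E* of the Euler discrete system is unstable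
when the step-size restriction is violated. -/
theorem stmt_17 (α β δ h : ℝ) (hα : 0 < α) (hβ : 0 < β) (hδ : 0 < δ) (hh : 0 < h)
    (h1 : 1 + α * δ > δ)
    (h2 : δ * (2 + α * δ) < (1 + α * δ) ^ 2 * (1 + β * δ))
    (Nstar Pstar GE HE : ℝ)
    (hN : Nstar = (1 + α * δ - δ) / (1 + α * δ))
    (hP : Pstar = δ * Nstar)
    (hGE : GE = (1 + α * δ) ^ 2 * (1 + β * δ) - δ * (2 + α * δ))
    (hHE : HE = β * δ * (1 + α * δ - δ) * (1 + α * δ))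
    (hstep : h > GE / HE)
    (J : Matrix (Fin 2) (Fin 2) ℝ)
    (hJ : J = !![1 - h * Nstar * (1 - Pstar / (Nstar + α * Pstar) ^ 2),
                 -(h * (Nstar / (Nstar + α * Pstar)) ^ 2);
                 h * β * (Pstar / Nstar) ^ 2,
                 1 - h * β * Pstar / Nstar]) :
    J.det > 1 ∧
      ∃ z : ℂ, z ^ 2 - ((Matrix.trace J : ℝ) : ℂ) * z + ((J.det : ℝ) : ℂ) = 0 ∧
        ‖z‖ > 1 :=
  stmt_17_general α β δ h hβ hδ hh h1 Nstar Pstar GE HE hN hP hGE hHE hstep J hJ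
end
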